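/- arXiv:2111.08866 — 4 statements merged into one kernel-verified Lean document; each statement's English description precedes it below -/
import Mathlib

section
/- Let Λ be a regular local ring, x a generator of a height-one prime ideal of Λ, and Ω = Λ/(x). If M is a finitely generated pseudo-null Λ-module, then both M[x] (the x-torsion submodule) and M/xM are torsion Ω-modules. -/
/-- A commutative Noetherian local ring is *regular* if its maximal ideal can be
generated by `Krull dimension`-many elements. -/
def IsRegularLocal (Λ : Type*) [CommRing Λ] [IsLocalRing Λ] : Prop :=
  IsNoetherianRing Λ ∧
    ∃ s : Finset Λ, Ideal.span (s : Set Λ) = IsLocalRing.maximalIdeal Λ ∧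
      ((s.card : ℕ∞) : WithBot ℕ∞) = ringKrullDim Λ

/-- A module `M` over a commutative ring `Λ` is *pseudo-null* if its localization at every
prime ideal of height `≤ 1` vanishes.  (Height `≤ 1` is expressed by the absence of a chain
`Q' < Q < P` of prime ideals below `P`.) -/
def IsPseudoNull (Λ : Type*) [CommRing Λ] (M : Type*) [AddCommGroup M] [Module Λ M] :
    Prop :=
  ∀ P : Ideal Λ, ∀ hP : P.IsPrime,
    (¬ ∃ Q Q' : Ideal Λ, Q.IsPrime ∧ Q'.IsPrime ∧ Q' < Q ∧ Q < P) →
    haveI := hP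
    Subsingleton (LocalizedModule P.primeCompl M)

/- Since `x ∉ Q`, every `q = x * a ∈ Q` has `a ∈ Q`, so `Q = (x) Q`, and Nakayama kills `Q`. -/
theorem Ideal.eq_bot_of_isPrime_of_lt_span_singleton {R : Type*} [CommRing R]
    [IsNoetherianRing R] {x : R} (hx : x ∈ Ideal.jacobson ⊥) {Q : Ideal R} (hQ : Q.IsPrime)
    (hQx : Q < Ideal.span {x}) : Q = ⊥ := by
  have hxQ : x ∉ Q := fun hxQ =>
    hQx.not_ge ((Ideal.span_singleton_le_iff_mem Q).mpr hxQ)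
  have hQ_le : Q ≤ Ideal.span {x} • Q := by
    intro q hq
    obtain ⟨a, rfl⟩ := Ideal.mem_span_singleton'.mp (hQx.le hq)
    have haQ : a ∈ Q := (hQ.mem_or_mem hq).resolve_right hxQ
    rw [smul_eq_mul, mul_comm a x]
    exact Ideal.mul_mem_mul (Ideal.mem_span_singleton_self x) haQ
  exact Submodule.eq_bot_of_le_smul_of_le_jacobson_bot _ Q (IsNoetherian.noetherian Q) hQ_le
    ((Ideal.span_singleton_le_iff_mem _).mpr hx)

theorem Ideal.not_exists_isPrime_chain_lt_span_singleton {R : Type*} [CommRing R]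
    [IsNoetherianRing R] {x : R} (hx : x ∈ Ideal.jacobson ⊥) :
    ¬ ∃ Q Q' : Ideal R, Q.IsPrime ∧ Q'.IsPrime ∧ Q' < Q ∧ Q < Ideal.span {x} := by
  rintro ⟨Q, Q', hQ, -, hQ'Q, hQx⟩
  rw [Ideal.eq_bot_of_isPrime_of_lt_span_singleton hx hQ hQx] at hQ'Q
  exact not_lt_bot hQ'Q

theorem IsPseudoNull.exists_notMem_span_singleton_smul_eq_zero {R : Type*} [CommRing R]
    [IsLocalRing R] [IsNoetherianRing R] {M : Type*} [AddCommGroup M] [Module R M]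
    (hM : IsPseudoNull R M) {x : R} (hx : Prime x) (m : M) :
    ∃ a : R, a ∉ Ideal.span {x} ∧ a • m = 0 := by
  have hprime : (Ideal.span {x}).IsPrime := (Ideal.span_singleton_prime hx.ne_zero).mpr hx
  have hjac : x ∈ Ideal.jacobson (⊥ : Ideal R) := by
    rw [IsLocalRing.jacobson_eq_maximalIdeal ⊥ bot_ne_top]
    exact hx.not_isUnit
  have hloc := hM _ hprime (Ideal.not_exists_isPrime_chain_lt_span_singleton hjac)
  exact LocalizedModule.subsingleton_iff.mp hloc m

theorem statement4_general (Λ : Type*) [CommRing Λ] [IsLocalRing Λ]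
    (hreg : IsRegularLocal Λ) (x : Λ)
    (hx : Prime x)  -- `x` generates a height-one prime ideal of `Λ`
    (M : Type*) [AddCommGroup M] [Module Λ M]
    (hM : IsPseudoNull Λ M) :
    (∀ m : Submodule.torsionBy Λ M x,
       ∃ a : Λ, a ∉ Ideal.span ({x} : Set Λ) ∧ a • m = 0) ∧
    (∀ m : M ⧸ (Ideal.span ({x} : Set Λ) • ⊤ : Submodule Λ M),
       ∃ a : Λ, a ∉ Ideal.span ({x} : Set Λ) ∧ a • m = 0) := by
  have := hreg.1
  constructor
  · rintro ⟨m, -⟩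
    obtain ⟨a, ha, ham⟩ := hM.exists_notMem_span_singleton_smul_eq_zero hx m
    exact ⟨a, ha, Subtype.ext ham⟩
  · intro m
    obtain ⟨n, rfl⟩ := Submodule.Quotient.mk_surjective _ m
    obtain ⟨a, ha, han⟩ := hM.exists_notMem_span_singleton_smul_eq_zero hx n
    exact ⟨a, ha, by rw [← Submodule.Quotient.mk_smul, han, Submodule.Quotient.mk_zero]⟩

/-- Let `Λ` be a regular local ring, `x` a generator of a height-one prime
ideal (equivalently a prime element), `Ω = Λ/(x)`.  If `M` is a finitely generated
pseudo-null `Λ`-module, then both the `x`-torsion submodule `M[x]` and the quotient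
`M/xM` are torsion `Ω`-modules (each element is killed by a nonzero element of `Ω`,
i.e. by the class of some `a ∉ (x)`). -/
theorem statement4 (Λ : Type*) [CommRing Λ] [IsLocalRing Λ] [IsDomain Λ]
    (hreg : IsRegularLocal Λ) (x : Λ)
    (hx : Prime x)  -- `x` generates a height-one prime ideal of `Λ`
    (M : Type*) [AddCommGroup M] [Module Λ M] [Module.Finite Λ M]
    (hM : IsPseudoNull Λ M) :
    (∀ m : Submodule.torsionBy Λ M x,
       ∃ a : Λ, a ∉ Ideal.span ({x} : Set Λ) ∧ a • m = 0) ∧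
    (∀ m : M ⧸ (Ideal.span ({x} : Set Λ) • ⊤ : Submodule Λ M),
       ∃ a : Λ, a ∉ Ideal.span ({x} : Set Λ) ∧ a • m = 0) :=
  statement4_general Λ hreg x hx M hM
end

section
/- Let Λ be a regular local ring, x a generator of a height-one prime ideal, and Ω = Λ/(x). If M is a finitely generated Λ-module such that M/xM is a torsion Ω-module, then M is a torsion Λ-module and M[x] is a torsion Ω-module. -/
open Pointwise

/-- Let `Λ` be a regular local ring, `x` a generator of a height-one prime
ideal (equivalently a prime element), `Ω = Λ/(x)`.  If `M` is a finitely generated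
`Λ`-module such that `M/xM` is a torsion `Ω`-module, then `M` is a torsion `Λ`-module and
the `x`-torsion submodule `M[x]` is a torsion `Ω`-module.  (Torsion over `Ω` is phrased
as: every element is killed by a nonzero element of `Ω`, i.e. by the class of some
`a ∉ (x)`.) -/
theorem statement5 (Λ : Type*) [CommRing Λ] [IsLocalRing Λ] [IsDomain Λ]
    (hreg : IsRegularLocal Λ) (x : Λ)
    (hx : Prime x)  -- `x` generates a height-one prime ideal of `Λ`
    (M : Type*) [AddCommGroup M] [Module Λ M] [Module.Finite Λ M]
    (hquot : ∀ m : M ⧸ (Ideal.span ({x} : Set Λ) • ⊤ : Submodule Λ M),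
       ∃ a : Λ, a ∉ Ideal.span ({x} : Set Λ) ∧ a • m = 0) :
    Module.IsTorsion Λ M ∧
    (∀ m : Submodule.torsionBy Λ M x,
       ∃ a : Λ, a ∉ Ideal.span ({x} : Set Λ) ∧ a • m = 0) := by
  classical
  set p : Ideal Λ := Ideal.span ({x} : Set Λ) with hp_def
  haveI hp : p.IsPrime := (Ideal.span_singleton_prime hx.ne_zero).mpr hx
  -- Localize at the prime `p = (x)`.
  set Rp := Localization.AtPrime p
  set Mp := LocalizedModule p.primeCompl M
  haveI : Module.Finite Rp Mp :=
    Module.Finite.of_isLocalizedModule p.primeCompl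
      (LocalizedModule.mkLinearMap p.primeCompl M)
  -- The localization of `M` at `p` is killed by Nakayama.
  have hle : (⊤ : Submodule Rp Mp) ≤
      (p.map (algebraMap Λ Rp)) • (⊤ : Submodule Rp Mp) := by
    intro z _
    induction z using LocalizedModule.induction_on with
    | h m s =>
      obtain ⟨a, ha, ha0⟩ := hquot (Submodule.Quotient.mk m)
      rw [← Submodule.Quotient.mk_smul, Submodule.Quotient.mk_eq_zero] at ha0
      rw [Submodule.ideal_span_singleton_smul] at ha0
      have hmem : a • m ∈ (x • (⊤ : Submodule Λ M) : Set M) := ha0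
      obtain ⟨m', -, hm'⟩ := Set.mem_smul_set.mp hmem
      have key : LocalizedModule.mk m s =
          (algebraMap Λ Rp x) • LocalizedModule.mk m' (⟨a, ha⟩ * s) := by
        rw [algebraMap_smul, LocalizedModule.smul'_mk, hm', LocalizedModule.mk_eq]
        exact ⟨1, by
          simp only [one_smul, Submonoid.smul_def, Submonoid.coe_mul]
          rw [← mul_smul, mul_comm, mul_smul]⟩
      rw [key]
      exact Submodule.smul_mem_smul
        (Ideal.mem_map_of_mem _ (Ideal.subset_span rfl)) trivial
  have hbot : (⊤ : Submodule Rp Mp) = ⊥ :=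
    Submodule.eq_bot_of_le_smul_of_le_jacobson_bot _ _
      Module.Finite.fg_top hle
      (by
        rw [Localization.AtPrime.map_eq_maximalIdeal,
          IsLocalRing.jacobson_eq_maximalIdeal ⊥ bot_ne_top])
  -- Hence every element of `M` is killed by some `a ∉ (x)`.
  have key : ∀ m : M, ∃ a : Λ, a ∉ p ∧ a • m = 0 := by
    intro m
    have h0 : (LocalizedModule.mk m 1 : Mp) = 0 := by
      have : (LocalizedModule.mk m 1 : Mp) ∈ (⊥ : Submodule Rp Mp) := by
        rw [← hbot]; trivial
      simpa using this
    rw [show (0 : Mp) = LocalizedModule.mk 0 1 from (LocalizedModule.zero_mk 1).symm,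
      LocalizedModule.mk_eq] at h0
    obtain ⟨u, hu⟩ := h0
    refine ⟨u, u.2, ?_⟩
    simpa [Submonoid.smul_def] using hu
  constructor
  · intro m
    obtain ⟨a, ha, h0⟩ := key m
    exact ⟨⟨a, mem_nonZeroDivisors_of_ne_zero fun h => ha (h ▸ p.zero_mem)⟩, h0⟩
  · intro m
    obtain ⟨a, ha, h0⟩ := key m.1
    exact ⟨a, ha, Subtype.ext (by simpa using h0)⟩
end

section
/- Let Λ be a regular local ring and M a finitely generated torsion Λ-module, with a pseudo-isomorphism φ: M → ⊕_{i∈I} Λ/(x_i^{n_i}) where each x_i generates a height-one prime. If x is a prime element of Λ coprime to all x_i, then M/xM is a torsion module over Ω = Λ/(x). -/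
/-- Let `Λ` be a regular local ring and `M` a finitely generated torsion
`Λ`-module, together with a pseudo-isomorphism `φ : M → ⊕_{i ∈ I} Λ/(x i ^ n i)` (a
`Λ`-linear map with pseudo-null kernel and cokernel), where each `x i` generates a
height-one prime (equivalently is a prime element) and `I` is finite.  If `x` is a prime
element of `Λ` coprime to all the `x i` (i.e. `x ∤ x i`), then `M/xM` is a torsion module
over `Ω = Λ/(x)`: every element is killed by a nonzero element of `Ω`, i.e. by the class
of some `a ∉ (x)`. -/
theorem statement6 (Λ : Type*) [CommRing Λ] [IsLocalRing Λ] [IsDomain Λ]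
    (hreg : IsRegularLocal Λ)
    (M : Type*) [AddCommGroup M] [Module Λ M] [Module.Finite Λ M]
    (hMtors : Module.IsTorsion Λ M)
    (I : Type*) [Fintype I] (x : I → Λ) (n : I → ℕ)
    (hxi : ∀ i, Prime (x i))  -- each `x i` generates a height-one prime
    (φ : M →ₗ[Λ] ∀ i, Λ ⧸ Ideal.span ({x i ^ n i} : Set Λ))
    (hker : IsPseudoNull Λ (LinearMap.ker φ))
    (hcoker : IsPseudoNull Λ
      ((∀ i, Λ ⧸ Ideal.span ({x i ^ n i} : Set Λ)) ⧸ LinearMap.range φ))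
    (x₀ : Λ) (hx₀ : Prime x₀) (hcop : ∀ i, ¬ x₀ ∣ x i) :
    ∀ m : M ⧸ (Ideal.span ({x₀} : Set Λ) • ⊤ : Submodule Λ M),
      ∃ a : Λ, a ∉ Ideal.span ({x₀} : Set Λ) ∧ a • m = 0  := by
  classical
  obtain ⟨hNoeth, -⟩ := hreg
  haveI := hNoeth
  set P : Ideal Λ := Ideal.span {x₀} with hP
  have hPprime : P.IsPrime := (Ideal.span_singleton_prime hx₀.ne_zero).mpr hx₀
  have hchain : ¬ ∃ Q Q' : Ideal Λ, Q.IsPrime ∧ Q'.IsPrime ∧ Q' < Q ∧ Q < P := by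
    rintro ⟨Q, Q', hQ, hQ', hlt, hltP⟩
    have hx0Q : x₀ ∉ Q := fun h =>
      hltP.ne (le_antisymm hltP.le ((Ideal.span_singleton_le_iff_mem Q).mpr h))
    have hQbot : Q = ⊥ := by
      ext q
      simp only [Ideal.mem_bot]
      constructor
      · intro hq
        have key : ∀ k : ℕ, ∃ b ∈ Q, q = x₀ ^ k * b := by
          intro k; induction k with
          | zero => exact ⟨q, hq, by ring⟩
          | succ k ih =>
            obtain ⟨b, hb, rfl⟩ := ih
            obtain ⟨b', rfl⟩ := Ideal.mem_span_singleton.mp (hltP.le hb)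
            exact ⟨b', (hQ.mem_or_mem hb).resolve_left hx0Q, by ring⟩
        have hmem : q ∈ ⨅ k : ℕ, P ^ k := by
          simp only [Ideal.mem_iInf]
          intro k
          obtain ⟨b, hb, rfl⟩ := key k
          rw [hP, Ideal.span_singleton_pow]
          exact Ideal.mul_mem_right _ _ (Ideal.mem_span_singleton_self _)
        rwa [Ideal.iInf_pow_eq_bot_of_isDomain P hPprime.ne_top, Ideal.mem_bot] at hmem
      · rintro rfl; exact Q.zero_mem
    exact absurd (hQbot ▸ hlt) not_lt_bot
  haveI hsub : Subsingleton (LocalizedModule P.primeCompl (LinearMap.ker φ)) :=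
    hker P hPprime hchain
  intro m
  obtain ⟨m, rfl⟩ := Submodule.Quotient.mk_surjective _ m
  set c : Λ := ∏ i, x i ^ n i with hc
  have hcP : c ∉ P := by
    rw [hP, Ideal.mem_span_singleton]
    intro hdvd
    obtain ⟨i, -, hdi⟩ := (Prime.dvd_finset_prod_iff hx₀ _).mp hdvd
    exact hcop i (hx₀.dvd_of_dvd_pow hdi)
  have hcm : c • m ∈ LinearMap.ker φ := by
    rw [LinearMap.mem_ker, map_smul]
    funext i
    obtain ⟨y, hy⟩ := Ideal.Quotient.mk_surjective (φ m i)
    show c • (φ m i) = 0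
    rw [← hy]
    have hdef : c • (Ideal.Quotient.mk (Ideal.span ({x i ^ n i} : Set Λ))) y =
        (Ideal.Quotient.mk (Ideal.span ({x i ^ n i} : Set Λ))) (c * y) := rfl
    rw [hdef, Ideal.Quotient.eq_zero_iff_mem, Ideal.mem_span_singleton]
    exact Dvd.dvd.mul_right (Finset.dvd_prod_of_mem _ (Finset.mem_univ i)) y
  have hzero : (LocalizedModule.mk (⟨c • m, hcm⟩ : LinearMap.ker φ) 1 :
      LocalizedModule P.primeCompl (LinearMap.ker φ)) = LocalizedModule.mk 0 1 :=
    Subsingleton.elim _ _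
  rw [LocalizedModule.mk_eq] at hzero
  obtain ⟨u, hu⟩ := hzero
  simp only [one_smul, smul_zero] at hu
  have hu' : (u : Λ) • (c • m) = 0 := congrArg Subtype.val hu
  refine ⟨(u : Λ) * c, ?_, ?_⟩
  · exact fun h => (hPprime.mem_or_mem h).elim u.2 hcP
  · rw [← Submodule.Quotient.mk_smul, mul_smul, hu', Submodule.Quotient.mk_zero]
end

section
/- Let Λ = Z_p[[G]] with G ≅ Z_p^2, and let H ⊆ G be a closed subgroup with G/H ≅ Z_p; fix a topological generator h of H. If M is a finitely generated pseudo-null Λ-module, then the coinvariant module M_H = M/(h−1)M is a finitely generated torsion module over Z_p[[G/H]] ≅ Λ/(h−1). -/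
section

variable {R : Type*} [CommRing R]

lemma Ideal.not_exists_isPrime_lt_lt_of_height_le_one {P : Ideal R} [P.IsPrime]
    (hP : P.height ≤ 1) :
    ¬ ∃ Q Q' : Ideal R, Q.IsPrime ∧ Q'.IsPrime ∧ Q' < Q ∧ Q < P := by
  rintro ⟨Q, Q', hQ, hQ', hQ'Q, hQP⟩
  have h₁ := Ideal.height_add_one_le_of_lt_of_isPrime hQ'Q
  have h₂ := Ideal.height_add_one_le_of_lt_of_isPrime hQP
  have : Q'.height + 2 ≤ 1 := by grw [← hP, ← h₂, ← h₁, add_assoc, one_add_one_eq_two]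
  exact absurd (le_add_self.trans this) (by decide)

lemma IsPseudoNull.exists_notMem_smul_eq_zero {M : Type*} [AddCommGroup M] [Module R M]
    (hM : IsPseudoNull R M) {P : Ideal R} [P.IsPrime] (hP : P.height ≤ 1) (x : M) :
    ∃ a ∉ P, a • x = 0 :=
  LocalizedModule.subsingleton_iff.mp
    (hM P ‹_› (Ideal.not_exists_isPrime_lt_lt_of_height_le_one hP)) x

lemma IsPseudoNull.exists_notMem_smul_quotient_eq_zero [IsNoetherianRing R] {π : R}
    (hπ : Prime π) {M : Type*} [AddCommGroup M] [Module R M] (hM : IsPseudoNull R M)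
    (N : Submodule R M) (m : M ⧸ N) : ∃ a ∉ Ideal.span {π}, a • m = 0 := by
  have := (Ideal.span_singleton_prime hπ.ne_zero).mpr hπ
  obtain ⟨x, rfl⟩ := N.mkQ_surjective m
  obtain ⟨a, ha, hax⟩ :=
    hM.exists_notMem_smul_eq_zero (Ideal.height_span_singleton_le_one hπ.not_isUnit) x
  exact ⟨a, ha, by rw [← map_smul, hax, map_zero]⟩

end

theorem statement10_general (p : ℕ) [Fact p.Prime]
    (e : Multiplicative (ℤ_[p] × ℤ_[p]) →* (MvPowerSeries (Fin 2) ℤ_[p])ˣ)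
    (h : ℤ_[p] × ℤ_[p])
    (hprime : Prime ((e (Multiplicative.ofAdd h) : MvPowerSeries (Fin 2) ℤ_[p]) - 1))
    (M : Type*) [AddCommGroup M] [Module (MvPowerSeries (Fin 2) ℤ_[p]) M]
    [Module.Finite (MvPowerSeries (Fin 2) ℤ_[p]) M]
    (hM : IsPseudoNull (MvPowerSeries (Fin 2) ℤ_[p]) M) :
    Module.Finite (MvPowerSeries (Fin 2) ℤ_[p])
      (M ⧸ (Ideal.span {(e (Multiplicative.ofAdd h) : MvPowerSeries (Fin 2) ℤ_[p]) - 1} • ⊤ :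
        Submodule (MvPowerSeries (Fin 2) ℤ_[p]) M)) ∧
    ∀ m : M ⧸ (Ideal.span {(e (Multiplicative.ofAdd h) : MvPowerSeries (Fin 2) ℤ_[p]) - 1} • ⊤ :
        Submodule (MvPowerSeries (Fin 2) ℤ_[p]) M),
      ∃ a : MvPowerSeries (Fin 2) ℤ_[p],
        a ∉ Ideal.span {(e (Multiplicative.ofAdd h) : MvPowerSeries (Fin 2) ℤ_[p]) - 1} ∧
        a • m = 0 :=
  ⟨inferInstance, hM.exists_notMem_smul_quotient_eq_zero hprime _⟩

/-- Let `Λ = ℤ_p[[G]]` with `G ≅ ℤ_p²` — realized, via the standard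
isomorphism `ℤ_p[[G]] ≅ ℤ_p[[S,T]]`, as the power series ring in two variables over
`ℤ_p`, with the group `G = ℤ_p × ℤ_p` embedded in `Λˣ` via `e` — and let `H ⊆ G` be a
closed subgroup with `G/H ≅ ℤ_p`, with fixed topological generator `h`.  The element
`e(h) - 1` generates a height-one prime ideal with `Λ/(e(h)-1) ≅ ℤ_p[[G/H]]`.  If `M` is
a finitely generated pseudo-null `Λ`-module, then the coinvariant module
`M_H = M/(e(h)-1)M` is a finitely generated torsion module over
`ℤ_p[[G/H]] ≅ Λ/(e(h)-1)`: torsion means every element is killed by a nonzero element,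
i.e. by the class of some `a ∉ (e(h)-1)`. -/
theorem statement10 (p : ℕ) [Fact p.Prime]
    (e : Multiplicative (ℤ_[p] × ℤ_[p]) →* (MvPowerSeries (Fin 2) ℤ_[p])ˣ)
    (H : AddSubgroup (ℤ_[p] × ℤ_[p]))
    (hHclosed : IsClosed (H : Set (ℤ_[p] × ℤ_[p])))
    (hGH : Nonempty (((ℤ_[p] × ℤ_[p]) ⧸ H) ≃+ ℤ_[p]))  -- `G/H ≅ ℤ_p`
    (h : ℤ_[p] × ℤ_[p])
    (hgen : (AddSubgroup.zmultiples h).topologicalClosure = H)  -- `h` topologically generates `H`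
    (hprime : Prime ((e (Multiplicative.ofAdd h) : MvPowerSeries (Fin 2) ℤ_[p]) - 1))
    (M : Type*) [AddCommGroup M] [Module (MvPowerSeries (Fin 2) ℤ_[p]) M]
    [Module.Finite (MvPowerSeries (Fin 2) ℤ_[p]) M]
    (hM : IsPseudoNull (MvPowerSeries (Fin 2) ℤ_[p]) M) :
    Module.Finite (MvPowerSeries (Fin 2) ℤ_[p])
      (M ⧸ (Ideal.span {(e (Multiplicative.ofAdd h) : MvPowerSeries (Fin 2) ℤ_[p]) - 1} • ⊤ :
        Submodule (MvPowerSeries (Fin 2) ℤ_[p]) M)) ∧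
    ∀ m : M ⧸ (Ideal.span {(e (Multiplicative.ofAdd h) : MvPowerSeries (Fin 2) ℤ_[p]) - 1} • ⊤ :
        Submodule (MvPowerSeries (Fin 2) ℤ_[p]) M),
      ∃ a : MvPowerSeries (Fin 2) ℤ_[p],
        a ∉ Ideal.span {(e (Multiplicative.ofAdd h) : MvPowerSeries (Fin 2) ℤ_[p]) - 1} ∧
        a • m = 0 :=
  statement10_general p e h hprime M hM
end
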